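/- arXiv:0907.1051 — 2 statements merged into one kernel-verified Lean document; each statement's English description precedes it below -/
import Mathlib

section
/- If x_1 ≤ x_2 ≤ ... ≤ x_n are positive integers with ∑_{i=1}^n 1/x_i = 1, and u_1 = 1, u_{k+1} = u_k(u_k+1), then x_i ≤ (n - i + 1)·u_i for every i. -/
/-!
Curtiss's bound: if `k` unit fractions `1/g_0 ≥ ⋯ ≥ 1/g_(k-1)` have sum `S < 1`, then
`1 - S ≥ 1/s_k`, where `s_k = ∏_(i<k) (s_i + 1)`. By induction every proper prefix obeys the
bound, so if `1 - S < 1/s_k`, every tail sum of the `1/g_i` dominates the corresponding tail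
of the `1/(s_i + 1)`, which telescopes to `1/s_j - 1/s_k`. Abel summation against the
increasing weights `g_i` turns this into `∑ g_i/(s_i + 1) ≤ k`, hence `∏ g_i ≤ s_k` by AM-GM;
but `1 - S` is a positive fraction with denominator `∏ g_i`, a contradiction.

Applied to the terms before `x_i` in a decomposition of `1`, the bound says that the remaining
`n - i + 1` terms, each at most `1/x_i`, add up to at least `1/u_i`.
-/

open Finset

/-- `sylvesterPred k + 1` is Sylvester's sequence `2, 3, 7, 43, …`; in the notation of the
statement, `sylvesterPred k = u (k + 1)`. -/
def sylvesterPred : ℕ → ℕ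
  | 0 => 1
  | k + 1 => sylvesterPred k * (sylvesterPred k + 1)

lemma sylvesterPred_pos (k : ℕ) : 0 < sylvesterPred k := by
  induction k with
  | zero => exact Nat.one_pos
  | succ k ih => exact Nat.mul_pos ih (Nat.succ_pos _)

lemma prod_range_sylvesterPred_add_one (k : ℕ) :
    ∏ i ∈ range k, (sylvesterPred i + 1) = sylvesterPred k := by
  induction k with
  | zero => rfl
  | succ k ih => rw [prod_range_succ, ih]; rfl

lemma sum_Ico_one_div_sylvesterPred_add_one {j k : ℕ} (hjk : j ≤ k) :
    ∑ i ∈ Ico j k, (1 : ℝ) / (sylvesterPred i + 1)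
      = 1 / sylvesterPred j - 1 / sylvesterPred k := by
  induction k, hjk using Nat.le_induction with
  | base => simp
  | succ k hjk ih =>
    have hk : (0 : ℝ) < sylvesterPred k := mod_cast sylvesterPred_pos k
    rw [sum_Ico_succ_top hjk, ih, sylvesterPred]
    push_cast
    field_simp
    ring

/-- AM-GM, via `t ≤ exp (t - 1)`. -/
lemma prod_le_one_of_sum_le_card {ι : Type*} (s : Finset ι) (r : ι → ℝ)
    (hr : ∀ i ∈ s, 0 ≤ r i) (hsum : ∑ i ∈ s, r i ≤ #s) : ∏ i ∈ s, r i ≤ 1 :=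
  calc ∏ i ∈ s, r i ≤ ∏ i ∈ s, Real.exp (r i - 1) :=
        prod_le_prod hr fun i _ => by linarith [Real.add_one_le_exp (r i - 1)]
    _ = Real.exp (∑ i ∈ s, (r i - 1)) := (Real.exp_sum s _).symm
    _ ≤ 1 := by
        rw [Real.exp_le_one_iff, sum_sub_distrib, sum_const, nsmul_one]
        linarith

lemma sum_Ico_mul_le_mul_sum_Ico {R : Type*} [CommRing R] [LinearOrder R] [IsStrictOrderedRing R]
    {k : ℕ} (w d : ℕ → R) (hw : Monotone w) (hd : ∀ j ≤ k, ∑ i ∈ Ico j k, d i ≤ 0)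
    {j : ℕ} (hj : j ≤ k) : ∑ i ∈ Ico j k, w i * d i ≤ w j * ∑ i ∈ Ico j k, d i := by
  induction hj using Nat.decreasingInduction with
  | self => simp
  | of_succ j hjk ih =>
    rw [sum_eq_sum_Ico_succ_bot hjk, sum_eq_sum_Ico_succ_bot hjk, mul_add]
    have hw' : w j * ∑ i ∈ Ico (j + 1) k, d i ≥ w (j + 1) * ∑ i ∈ Ico (j + 1) k, d i :=
      mul_le_mul_of_nonpos_right (hw j.le_succ) (hd _ hjk)
    linarith

lemma prod_range_le_prod_range_of_sum_Ico_le {k : ℕ} (a c : ℕ → ℝ) (ha : ∀ i, 0 < a i)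
    (ha_anti : Antitone a) (hc : ∀ i, 0 ≤ c i)
    (htail : ∀ j ≤ k, ∑ i ∈ Ico j k, c i ≤ ∑ i ∈ Ico j k, a i) :
    ∏ i ∈ range k, c i ≤ ∏ i ∈ range k, a i := by
  have hw : Monotone fun i => (a i)⁻¹ := fun i j hij => inv_anti₀ (ha j) (ha_anti hij)
  have hd : ∀ j ≤ k, ∑ i ∈ Ico j k, (c i - a i) ≤ 0 := fun j hj => by
    rw [sum_sub_distrib]; linarith [htail j hj]
  have hratio : ∑ i ∈ range k, c i / a i ≤ #(range k) := by
    have h : ∑ i ∈ range k, (c i / a i - 1) ≤ 0 :=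
      calc ∑ i ∈ range k, (c i / a i - 1) = ∑ i ∈ Ico 0 k, (a i)⁻¹ * (c i - a i) := by
            rw [range_eq_Ico]
            exact sum_congr rfl fun i _ => by field_simp [(ha i).ne']
        _ ≤ (a 0)⁻¹ * ∑ i ∈ Ico 0 k, (c i - a i) :=
            sum_Ico_mul_le_mul_sum_Ico _ _ hw hd (Nat.zero_le k)
        _ ≤ 0 := mul_nonpos_of_nonneg_of_nonpos (inv_nonneg.2 (ha 0).le) (hd 0 (Nat.zero_le k))
    rwa [sum_sub_distrib, sum_const, nsmul_one, sub_nonpos] at h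
  have hprod := prod_le_one_of_sum_le_card _ _ (fun i _ => div_nonneg (hc i) (ha i).le) hratio
  rwa [prod_div_distrib, div_le_one (prod_pos fun i _ => ha i)] at hprod

lemma one_div_prod_le_one_sub_sum_one_div {ι : Type*} (s : Finset ι) (g : ι → ℕ)
    (hg : ∀ i ∈ s, 0 < g i) (h : ∑ i ∈ s, (1 : ℝ) / g i < 1) :
    1 / ∏ i ∈ s, (g i : ℝ) ≤ 1 - ∑ i ∈ s, (1 : ℝ) / g i := by
  classical
  set N := ∑ i ∈ s, ∏ j ∈ s.erase i, g j
  have hP : (0 : ℝ) < ∏ i ∈ s, (g i : ℝ) := prod_pos fun i hi => mod_cast hg i hi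
  -- the sum has denominator dividing `∏ g i`
  have hN : (∑ i ∈ s, (1 : ℝ) / g i) * ∏ i ∈ s, (g i : ℝ) = N := by
    rw [sum_mul]
    push_cast [N]
    refine sum_congr rfl fun i hi => ?_
    have hgi : (g i : ℝ) ≠ 0 := mod_cast (hg i hi).ne'
    rw [← mul_prod_erase s (fun j => (g j : ℝ)) hi]
    field_simp
  have hNP : N < ∏ i ∈ s, g i := by
    have : (N : ℝ) < ∏ i ∈ s, (g i : ℝ) := hN ▸ mul_lt_of_lt_one_left hP h
    exact_mod_cast this
  have hNP' : (N : ℝ) + 1 ≤ ∏ i ∈ s, (g i : ℝ) := by exact_mod_cast hNP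
  rw [div_le_iff₀ hP, sub_mul, hN, one_mul]
  linarith

theorem sum_one_div_le_one_sub_one_div_sylvesterPred (g : ℕ → ℕ) (hg : ∀ i, 0 < g i)
    (hmono : Monotone g) (k : ℕ) (h : ∑ i ∈ range k, (1 : ℝ) / g i < 1) :
    ∑ i ∈ range k, (1 : ℝ) / g i ≤ 1 - 1 / sylvesterPred k := by
  induction k using Nat.strong_induction_on with
  | _ k ih =>
  by_contra! hgap
  have htail : ∀ j ≤ k, ∑ i ∈ Ico j k, (1 : ℝ) / (sylvesterPred i + 1)
      ≤ ∑ i ∈ Ico j k, (1 : ℝ) / g i := by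
    intro j hj
    rcases hj.lt_or_eq with hjk | rfl
    · have hprefix : ∑ i ∈ range j, (1 : ℝ) / g i ≤ ∑ i ∈ range k, (1 : ℝ) / g i :=
        sum_le_sum_of_subset_of_nonneg (range_subset_range.2 hj) fun i _ _ => by positivity
      have := ih j hjk (hprefix.trans_lt h)
      rw [sum_Ico_one_div_sylvesterPred_add_one hj, sum_Ico_eq_sub _ hj]
      linarith
    · simp
  have hprod := prod_range_le_prod_range_of_sum_Ico_le (fun i => (1 : ℝ) / g i)
    (fun i => 1 / (sylvesterPred i + 1)) (fun i => by have := hg i; positivity)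
    (fun i j hij => one_div_le_one_div_of_le (mod_cast hg i) (mod_cast hmono hij))
    (fun i => by positivity) htail
  have hsylv : ∏ i ∈ range k, ((sylvesterPred i : ℝ) + 1) = sylvesterPred k := by
    exact_mod_cast prod_range_sylvesterPred_add_one k
  have : 1 / (sylvesterPred k : ℝ) ≤ 1 - ∑ i ∈ range k, (1 : ℝ) / g i :=
    calc 1 / (sylvesterPred k : ℝ) = ∏ i ∈ range k, 1 / ((sylvesterPred i : ℝ) + 1) := by
          rw [prod_div_distrib, prod_const_one, hsylv]
      _ ≤ ∏ i ∈ range k, (1 : ℝ) / g i := hprod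
      _ = 1 / ∏ i ∈ range k, (g i : ℝ) := by rw [prod_div_distrib, prod_const_one]
      _ ≤ 1 - ∑ i ∈ range k, (1 : ℝ) / g i :=
          one_div_prod_le_one_sub_sum_one_div _ g (fun i _ => hg i) h
  linarith

lemma le_mul_sylvesterPred_of_sum_eq_one (g : ℕ → ℕ) (hg : ∀ i, 0 < g i) (hmono : Monotone g)
    {n k : ℕ} (hsum : ∑ i ∈ range n, (1 : ℝ) / g i = 1) (hk : k < n) :
    g k ≤ (n - k) * sylvesterPred k := by
  have hsplit := sum_range_add_sum_Ico (fun i => (1 : ℝ) / g i) hk.le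
  have htail_pos : 0 < ∑ i ∈ Ico k n, (1 : ℝ) / g i :=
    sum_pos (fun i _ => by have := hg i; positivity) ⟨k, mem_Ico.2 ⟨le_rfl, hk⟩⟩
  have hhead := sum_one_div_le_one_sub_one_div_sylvesterPred g hg hmono k (by linarith)
  have htail_le : ∑ i ∈ Ico k n, (1 : ℝ) / g i ≤ (n - k : ℕ) * (1 / g k) := by
    rw [← Nat.card_Ico, ← nsmul_eq_mul]
    exact sum_le_card_nsmul _ _ _ fun i hi =>
      one_div_le_one_div_of_le (mod_cast hg k) (mod_cast hmono (mem_Ico.1 hi).1)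
  have hgk : (0 : ℝ) < g k := mod_cast hg k
  have hsk : (0 : ℝ) < sylvesterPred k := mod_cast sylvesterPred_pos k
  have : 1 / (sylvesterPred k : ℝ) ≤ (n - k : ℕ) * (1 / g k) := by linarith
  rw [mul_one_div, div_le_div_iff₀ hsk hgk, one_mul] at this
  exact_mod_cast this

/-- If `x 0 ≤ ... ≤ x (n-1)` are positive integers with `∑ 1/(x i) = 1`, and
`u 1 = 1`, `u (k+1) = u k * (u k + 1)`, then `x i ≤ (n - i) * u (i+1)`
(the `i`-th term, 1-indexed as position `i+1`, is at most `(n - (i+1) + 1) * u (i+1)`). -/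
theorem stmt2 (u : ℕ → ℕ) (hu1 : u 1 = 1)
    (hurec : ∀ k, 1 ≤ k → u (k + 1) = u k * (u k + 1))
    (n : ℕ) (x : Fin n → ℕ) (hpos : ∀ i, 0 < x i)
    (hmono : Monotone x)
    (hsum : ∑ i, (1 : ℚ) / (x i) = 1) :
    ∀ i : Fin n, x i ≤ (n - (i : ℕ)) * u ((i : ℕ) + 1) := by
  have hu : ∀ k, u (k + 1) = sylvesterPred k := by
    intro k
    induction k with
    | zero => exact hu1
    | succ k ih => rw [hurec (k + 1) k.succ_pos, ih]; rfl
  intro i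
  have hn : 0 < n := i.pos
  set g : ℕ → ℕ := fun j => x ⟨min j (n - 1), by omega⟩
  have hgx : ∀ j : Fin n, g j = x j := fun j => congrArg x (Fin.ext (min_eq_left (by omega)))
  have hg_mono : Monotone g := fun a b hab => hmono (Fin.mk_le_mk.2 (by omega))
  have hg_sum : ∑ j ∈ range n, (1 : ℝ) / g j = 1 := by
    rw [← Fin.sum_univ_eq_sum_range (fun j => (1 : ℝ) / g j)]
    simp only [hgx]
    simpa using congrArg (fun q : ℚ => (q : ℝ)) hsum
  rw [hu, ← hgx]
  exact le_mul_sylvesterPred_of_sum_eq_one g (fun j => hpos _) hg_mono hg_sum i.isLt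
end

section
/- The only 5-tuples of positive integers x_1 ≤ x_2 ≤ x_3 ≤ x_4 ≤ x_5 with ∑_{i=1}^5 1/x_i = 1 and such that x_5/x_i is a perfect square for each i are (5,5,5,5,5) and (2,8,8,8,8). -/
/-!
Writing `x₅ = xᵢ pᵢ²`, all the `pᵢ²` divide `x₅`, hence so does `L²` for `L = lcm pᵢ`; with
`x₅ = c L²` every `xᵢ = c (L / pᵢ)²`. Multiplying `∑ 1/xᵢ = 1` by `c` leaves five positive integers
`yᵢ` with `∑ 1/yᵢ² = c`. Each term is `1` or at most `1/4`, so either all `yᵢ` are `1` (`c = 5`),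
or exactly one is and the others are `2` (`c = 2`), or none is and `c = 1`. The last case is
impossible: reciprocal squares of integers `≥ 2` reach `1` in five terms only if four are `1/4`.
-/

theorem Finset.lcm_pow_dvd {ι : Type*} {s : Finset ι} {f : ι → ℕ} {n k : ℕ} (hn : n ≠ 0)
    (h : ∀ i ∈ s, f i ^ k ∣ n) : s.lcm f ^ k ∣ n := by
  rcases Nat.eq_zero_or_pos k with rfl | hk
  · simp
  have hf : ∀ i ∈ s, f i ≠ 0 := fun i hi hfi => hn <| by simpa [hfi, hk.ne'] using h i hi
  rw [← Nat.factorization_le_iff_dvd (pow_ne_zero k (Finset.lcm_ne_zero_iff.mpr hf)) hn]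
  intro p
  rw [Nat.factorization_pow, Finsupp.smul_apply, Finset.factorization_lcm hf, smul_eq_mul,
    mul_comm, ← Nat.le_div_iff_mul_le hk, Finset.sup_le_iff]
  intro i hi
  have := (Nat.factorization_le_iff_dvd (pow_ne_zero k (hf i hi)) hn).mpr (h i hi) p
  rw [Nat.factorization_pow, Finsupp.smul_apply, smul_eq_mul, mul_comm] at this
  exact (Nat.le_div_iff_mul_le hk).mpr this

theorem Finset.exists_forall_eq_mul_sq {s : Finset ℕ} {n : ℕ} (hn : n ≠ 0)
    (h : ∀ x ∈ s, ∃ p, n = x * p ^ 2) : ∃ c, ∀ x ∈ s, ∃ y, x = c * y ^ 2 := by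
  choose! p hp using h
  obtain ⟨c, hc⟩ := Finset.lcm_pow_dvd hn fun x hx => Dvd.intro_left _ (hp x hx).symm
  refine ⟨c, fun x hx => ?_⟩
  obtain ⟨y, hy⟩ := Finset.dvd_lcm (f := p) hx
  have hpx : p x ^ 2 ≠ 0 := fun h0 => hn <| by rw [hp x hx, h0, mul_zero]
  refine ⟨y, mul_right_cancel₀ hpx ?_⟩
  rw [← hp x hx, hc, hy]
  ring

theorem Nat.one_div_sq_le_one_div_sq {K : Type*} [Field K] [LinearOrder K] [IsStrictOrderedRing K]
    {m y : ℕ} (hm : 0 < m) (h : m ≤ y) : 1 / (y : K) ^ 2 ≤ 1 / (m : K) ^ 2 := by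
  gcongr

theorem one_div_sq_le_quarter {y : ℕ} (hy : 2 ≤ y) : 1 / (y : ℚ) ^ 2 ≤ 1 / 4 :=
  (Nat.one_div_sq_le_one_div_sq two_pos hy).trans_eq (by norm_num)

theorem sum_inv_sq_ne_natCast {y₁ y₂ y₃ y₄ y₅ : ℕ} (h₁ : 2 ≤ y₁) (h₁₂ : y₁ ≤ y₂)
    (h₂₃ : y₂ ≤ y₃) (h₃₄ : y₃ ≤ y₄) (h₄₅ : y₄ ≤ y₅) (s : ℕ) :
    (1 : ℚ) / y₁ ^ 2 + 1 / y₂ ^ 2 + 1 / y₃ ^ 2 + 1 / y₄ ^ 2 + 1 / y₅ ^ 2 ≠ s := by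
  intro h
  have pos : ∀ y : ℕ, 0 < y → (0 : ℚ) < 1 / y ^ 2 := fun y hy => by positivity
  have p₅ := pos y₅ (by omega)
  have q₁ := one_div_sq_le_quarter h₁
  have q₂ := one_div_sq_le_quarter (y := y₂) (by omega)
  have q₃ := one_div_sq_le_quarter (y := y₃) (by omega)
  have hl : (0 : ℚ) < s := by
    linarith [pos y₁ (by omega), pos y₂ (by omega), pos y₃ (by omega), pos y₄ (by omega)]
  have hu : (s : ℚ) < 2 := by
    linarith [one_div_sq_le_quarter (y := y₄) (by omega),
      one_div_sq_le_quarter (y := y₅) (by omega)]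
  obtain rfl : s = 1 := by norm_cast at hl hu; omega
  obtain rfl | h₄ := (show y₄ = 2 ∨ 3 ≤ y₄ by omega)
  · obtain ⟨rfl, rfl, rfl⟩ : y₁ = 2 ∧ y₂ = 2 ∧ y₃ = 2 := by omega
    norm_num at h p₅
    linarith
  · linarith [Nat.one_div_sq_le_one_div_sq (K := ℚ) three_pos h₄,
      Nat.one_div_sq_le_one_div_sq (K := ℚ) (y := y₅) three_pos (by omega)]

theorem eq_two_of_sum_inv_sq_eq_one {y₁ y₂ y₃ y₄ : ℕ} (h₁ : 2 ≤ y₁) (h₁₂ : y₁ ≤ y₂)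
    (h₂₃ : y₂ ≤ y₃) (h₃₄ : y₃ ≤ y₄)
    (h : (1 : ℚ) / y₁ ^ 2 + 1 / y₂ ^ 2 + 1 / y₃ ^ 2 + 1 / y₄ ^ 2 = 1) :
    y₁ = 2 ∧ y₂ = 2 ∧ y₃ = 2 ∧ y₄ = 2 := by
  suffices y₄ < 3 by omega
  by_contra! h₄
  linarith [one_div_sq_le_quarter h₁, one_div_sq_le_quarter (y := y₂) (by omega),
    one_div_sq_le_quarter (y := y₃) (by omega), Nat.one_div_sq_le_one_div_sq (K := ℚ) three_pos h₄]

theorem eq_of_sum_inv_sq_eq_natCast {y₁ y₂ y₃ y₄ y₅ s : ℕ} (h₁ : 0 < y₁) (h₁₂ : y₁ ≤ y₂)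
    (h₂₃ : y₂ ≤ y₃) (h₃₄ : y₃ ≤ y₄) (h₄₅ : y₄ ≤ y₅)
    (h : (1 : ℚ) / y₁ ^ 2 + 1 / y₂ ^ 2 + 1 / y₃ ^ 2 + 1 / y₄ ^ 2 + 1 / y₅ ^ 2 = s) :
    (s = 5 ∧ y₁ = 1 ∧ y₂ = 1 ∧ y₃ = 1 ∧ y₄ = 1 ∧ y₅ = 1) ∨
      (s = 2 ∧ y₁ = 1 ∧ y₂ = 2 ∧ y₃ = 2 ∧ y₄ = 2 ∧ y₅ = 2) := by
  have pos : ∀ y : ℕ, 0 < y → (0 : ℚ) < 1 / y ^ 2 := fun y hy => by positivity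
  have p₂ := pos y₂ (by omega)
  have p₃ := pos y₃ (by omega)
  have p₄ := pos y₄ (by omega)
  have p₅ := pos y₅ (by omega)
  obtain h₁ | rfl := (show 2 ≤ y₁ ∨ y₁ = 1 by omega)
  · exact absurd h (sum_inv_sq_ne_natCast h₁ h₁₂ h₂₃ h₃₄ h₄₅ s)
  have q₅ : 2 ≤ y₅ → 1 / (y₅ : ℚ) ^ 2 ≤ 1 / 4 := one_div_sq_le_quarter
  have q₄ : 2 ≤ y₄ → 1 / (y₄ : ℚ) ^ 2 ≤ 1 / 4 := one_div_sq_le_quarter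
  have q₃ : 2 ≤ y₃ → 1 / (y₃ : ℚ) ^ 2 ≤ 1 / 4 := one_div_sq_le_quarter
  obtain h₂ | rfl := (show 2 ≤ y₂ ∨ y₂ = 1 by omega)
  · have hl : (1 : ℚ) < s := by linarith
    have hu : (s : ℚ) < 3 := by
      linarith [one_div_sq_le_quarter h₂, q₃ (by omega), q₄ (by omega), q₅ (by omega)]
    obtain rfl : s = 2 := by norm_cast at hl hu; omega
    have := eq_two_of_sum_inv_sq_eq_one h₂ h₂₃ h₃₄ h₄₅ (by push_cast at h; linarith)
    right
    omega
  obtain h₃ | rfl := (show 2 ≤ y₃ ∨ y₃ = 1 by omega)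
  · have hl : (2 : ℚ) < s := by linarith
    have hu : (s : ℚ) < 3 := by linarith [q₃ h₃, q₄ (by omega), q₅ (by omega)]
    norm_cast at hl hu
    omega
  obtain h₄ | rfl := (show 2 ≤ y₄ ∨ y₄ = 1 by omega)
  · have hl : (3 : ℚ) < s := by linarith
    have hu : (s : ℚ) < 4 := by linarith [q₄ h₄, q₅ (by omega)]
    norm_cast at hl hu
    omega
  obtain h₅ | rfl := (show 2 ≤ y₅ ∨ y₅ = 1 by omega)
  · have hl : (4 : ℚ) < s := by linarith
    have hu : (s : ℚ) < 5 := by linarith [q₅ h₅]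
    norm_cast at hl hu
    omega
  norm_num at h
  exact Or.inl ⟨by exact_mod_cast h.symm, rfl, rfl, rfl, rfl, rfl⟩

theorem stmt4_general (x₁ x₂ x₃ x₄ x₅ : ℕ) (h1 : 0 < x₁)
    (h12 : x₁ ≤ x₂) (h23 : x₂ ≤ x₃) (h34 : x₃ ≤ x₄) (h45 : x₄ ≤ x₅)
    (hsum : (1 : ℚ) / x₁ + 1 / x₂ + 1 / x₃ + 1 / x₄ + 1 / x₅ = 1)
    (hsq1 : ∃ k : ℕ, x₅ = x₁ * k ^ 2)
    (hsq2 : ∃ k : ℕ, x₅ = x₂ * k ^ 2)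
    (hsq3 : ∃ k : ℕ, x₅ = x₃ * k ^ 2)
    (hsq4 : ∃ k : ℕ, x₅ = x₄ * k ^ 2) :
    (x₁ = 5 ∧ x₂ = 5 ∧ x₃ = 5 ∧ x₄ = 5 ∧ x₅ = 5) ∨
    (x₁ = 2 ∧ x₂ = 8 ∧ x₃ = 8 ∧ x₄ = 8 ∧ x₅ = 8) := by
  obtain ⟨c, hc⟩ := Finset.exists_forall_eq_mul_sq (s := {x₁, x₂, x₃, x₄, x₅}) (n := x₅)
    (by omega) (by simpa [or_imp, forall_and] using ⟨hsq1, hsq2, hsq3, hsq4, 1, by ring⟩)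
  obtain ⟨y₁, rfl⟩ := hc x₁ (by simp)
  obtain ⟨y₂, rfl⟩ := hc x₂ (by simp)
  obtain ⟨y₃, rfl⟩ := hc x₃ (by simp)
  obtain ⟨y₄, rfl⟩ := hc x₄ (by simp)
  obtain ⟨y₅, rfl⟩ := hc x₅ (by simp)
  obtain ⟨hc₀, hy₁⟩ : 0 < c ∧ 0 < y₁ := by simpa [Nat.pos_iff_ne_zero] using h1
  have mono {a b : ℕ} (h : c * a ^ 2 ≤ c * b ^ 2) : a ≤ b :=
    (Nat.pow_le_pow_iff_left two_ne_zero).mp (Nat.le_of_mul_le_mul_left h hc₀)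
  have hsum' : (1 : ℚ) / y₁ ^ 2 + 1 / y₂ ^ 2 + 1 / y₃ ^ 2 + 1 / y₄ ^ 2 + 1 / y₅ ^ 2 = c := by
    conv_rhs => rw [← mul_one (c : ℚ), ← hsum]
    push_cast
    field_simp
  rcases eq_of_sum_inv_sq_eq_natCast hy₁ (mono h12) (mono h23) (mono h34) (mono h45) hsum' with
    ⟨rfl, rfl, rfl, rfl, rfl, rfl⟩ | ⟨rfl, rfl, rfl, rfl, rfl, rfl⟩ <;> simp

/-- The only 5-tuples of positive integers `x₁ ≤ x₂ ≤ x₃ ≤ x₄ ≤ x₅` with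
`∑ 1/xᵢ = 1` such that `x₅ / xᵢ` is a perfect square for each `i`
are `(5,5,5,5,5)` and `(2,8,8,8,8)`. -/
theorem stmt4 (x₁ x₂ x₃ x₄ x₅ : ℕ) (h1 : 0 < x₁)
    (h12 : x₁ ≤ x₂) (h23 : x₂ ≤ x₃) (h34 : x₃ ≤ x₄) (h45 : x₄ ≤ x₅)
    (hsum : (1 : ℚ) / x₁ + 1 / x₂ + 1 / x₃ + 1 / x₄ + 1 / x₅ = 1)
    (hsq1 : ∃ k : ℕ, x₅ = x₁ * k ^ 2)
    (hsq2 : ∃ k : ℕ, x₅ = x₂ * k ^ 2)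
    (hsq3 : ∃ k : ℕ, x₅ = x₃ * k ^ 2)
    (hsq4 : ∃ k : ℕ, x₅ = x₄ * k ^ 2)
    (hsq5 : ∃ k : ℕ, x₅ = x₅ * k ^ 2) :
    (x₁ = 5 ∧ x₂ = 5 ∧ x₃ = 5 ∧ x₄ = 5 ∧ x₅ = 5) ∨
    (x₁ = 2 ∧ x₂ = 8 ∧ x₃ = 8 ∧ x₄ = 8 ∧ x₅ = 8) :=
  stmt4_general x₁ x₂ x₃ x₄ x₅ h1 h12 h23 h34 h45 hsum hsq1 hsq2 hsq3 hsq4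
end
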